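/- arXiv:2412.01633 — 2 statements merged into one kernel-verified Lean document; each statement's English description precedes it below -/
import Mathlib

section
/- Let φ₀ solve φ₀'' = W'(φ₀) on ℝ, with φ₀', φ₀'' decaying exponentially at ±∞ and W smooth. Then ∫_ℝ W'''(φ₀(z)) · z · (φ₀'(z))³ dz = 2 ∫_ℝ (φ₀''(z))² dz. -/
open MeasureTheory Real Filter Set Topology

lemma my_integrable_exp_neg_abs {ν : ℝ} (hν : 0 < ν) :
    Integrable (fun z : ℝ => Real.exp (-ν * |z|)) := by
  have base : IntegrableOn (fun x : ℝ => Real.exp (-ν * |x|)) (Ioi 0) :=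
    (exp_neg_integrableOn_Ioi 0 hν).congr_fun
      (fun x hx => by rw [abs_of_pos hx]) measurableSet_Ioi
  rw [← integrableOn_univ, ← Set.Iio_union_Ici (a := (0 : ℝ)), integrableOn_union,
    integrableOn_Ici_iff_integrableOn_Ioi]
  refine ⟨?_, base⟩
  rw [← (Measure.measurePreserving_neg (volume : Measure ℝ)).integrableOn_comp_preimage
      (Homeomorph.neg ℝ).measurableEmbedding]
  simpa only [Function.comp_def, abs_neg, neg_preimage, neg_Iio, neg_zero] using base

/-- `∫_ℝ W'''(φ₀) z (φ₀')³ dz = 2 ∫_ℝ (φ₀'')² dz` for the heteroclinic with exponential decay. -/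
theorem integral_Wppp_z_phi_cubed
    (W φ₀ : ℝ → ℝ)
    (hW : ContDiff ℝ 4 W) (hφ : ContDiff ℝ (⊤ : ℕ∞) φ₀)
    (hode : ∀ z : ℝ, deriv (deriv φ₀) z = deriv W (φ₀ z))
    (hdecay : ∃ C > 0, ∃ ν > 0, ∀ z : ℝ,
      |deriv φ₀ z| ≤ C * Real.exp (-ν * |z|) ∧
      |deriv (deriv φ₀) z| ≤ C * Real.exp (-ν * |z|))
    (hint1 : Integrable (fun z : ℝ =>
      deriv (deriv (deriv W)) (φ₀ z) * z * (deriv φ₀ z) ^ 3))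
    (hint2 : Integrable (fun z : ℝ => (deriv (deriv φ₀) z) ^ 2)) :
    ∫ z : ℝ, deriv (deriv (deriv W)) (φ₀ z) * z * (deriv φ₀ z) ^ 3
      = 2 * ∫ z : ℝ, (deriv (deriv φ₀) z) ^ 2 := by
  obtain ⟨C, hC, ν, hν, hd⟩ := hdecay
  -- smoothness of φ₀ and its derivatives
  have hphiT : ContDiff ℝ (⊤ : ℕ∞) φ₀ := hφ.of_le (by simp)
  have hφ1 : ContDiff ℝ (⊤ : ℕ∞) (deriv φ₀) := (contDiff_infty_iff_deriv.mp hphiT).2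
  have hφd : ∀ z, HasDerivAt φ₀ (deriv φ₀ z) z := fun z =>
    ((hphiT.differentiable (by simp)) z).hasDerivAt
  have hφd2 : ∀ z, HasDerivAt (deriv φ₀) (deriv (deriv φ₀) z) z := fun z =>
    ((hφ1.differentiable (by simp)) z).hasDerivAt
  -- derivatives of W
  have hW3 : ContDiff ℝ 3 (deriv W) := by
    have h4 : ContDiff ℝ ((3 : WithTop ℕ∞) + 1) W := by
      convert hW using 2
      norm_num
    exact (contDiff_succ_iff_deriv.mp h4).2.2
  have hW2 : ContDiff ℝ 2 (deriv (deriv W)) := by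
    have h3 : ContDiff ℝ ((2 : WithTop ℕ∞) + 1) (deriv W) := by
      convert hW3 using 2
      norm_num
    exact (contDiff_succ_iff_deriv.mp h3).2.2
  have hWd' : ∀ x, HasDerivAt (deriv W) (deriv (deriv W) x) x := fun x =>
    ((hW3.differentiable (by norm_num)) x).hasDerivAt
  have hWd'' : ∀ x, HasDerivAt (deriv (deriv W)) (deriv (deriv (deriv W)) x) x := fun x =>
    ((hW2.differentiable (by norm_num)) x).hasDerivAt
  -- derivative of φ₀''
  have hdd : deriv (deriv φ₀) = fun z => deriv W (φ₀ z) := funext hode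
  have hφd3 : ∀ z, HasDerivAt (deriv (deriv φ₀))
      (deriv (deriv W) (φ₀ z) * deriv φ₀ z) z := by
    intro z
    rw [hdd]
    exact (hWd' (φ₀ z)).comp z (hφd z)
  have hg : ∀ z, HasDerivAt (fun z => deriv (deriv W) (φ₀ z))
      (deriv (deriv (deriv W)) (φ₀ z) * deriv φ₀ z) z := fun z =>
    (hWd'' (φ₀ z)).comp z (hφd z)
  -- the potential function Φ
  set Φ : ℝ → ℝ := fun z =>
    z * (deriv φ₀ z) ^ 2 * deriv (deriv W) (φ₀ z)
      - deriv φ₀ z * deriv (deriv φ₀) z - z * (deriv (deriv φ₀) z) ^ 2 with hΦdef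
  have hΦ : ∀ z, HasDerivAt Φ
      (deriv (deriv (deriv W)) (φ₀ z) * z * (deriv φ₀ z) ^ 3
        - 2 * (deriv (deriv φ₀) z) ^ 2) z := by
    intro z
    have e1 := ((hasDerivAt_id z).mul ((hφd2 z).pow 2)).mul (hg z)
    have e2 := (hφd2 z).mul (hφd3 z)
    have e3 := (hasDerivAt_id z).mul ((hφd3 z).pow 2)
    have := (e1.sub e2).sub e3
    refine (this.congr_deriv ?_).congr_of_eventuallyEq (Filter.Eventually.of_forall fun x => ?_)
    · simp only [id_eq, Pi.pow_apply, Pi.mul_apply]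
      push_cast
      ring
    · rfl
  -- integrability of deriv φ₀
  have hexp : Integrable (fun z : ℝ => C * Real.exp (-ν * |z|)) :=
    (my_integrable_exp_neg_abs hν).const_mul C
  have hφ'int : Integrable (deriv φ₀) := by
    refine hexp.mono' hφ1.continuous.aestronglyMeasurable ?_
    filter_upwards with z using by simpa [Real.norm_eq_abs] using (hd z).1
  -- boundedness of φ₀
  set M : ℝ := |φ₀ 0| + ∫ x : ℝ, |deriv φ₀ x| with hMdef
  have hInt0 : (0 : ℝ) ≤ ∫ x : ℝ, |deriv φ₀ x| :=
    integral_nonneg fun x => abs_nonneg _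
  have hM : ∀ z, |φ₀ z| ≤ M := by
    intro z
    have hφz : φ₀ z - φ₀ 0 = ∫ x in (0:ℝ)..z, deriv φ₀ x := by
      rw [intervalIntegral.integral_deriv_eq_sub
        (fun x _ => (hphiT.differentiable (by simp) x)) hφ'int.intervalIntegrable]
    have h1 : |φ₀ z - φ₀ 0| ≤ ∫ x in Set.uIoc (0:ℝ) z, |deriv φ₀ x| := by
      rw [hφz]
      simpa [Real.norm_eq_abs] using
        intervalIntegral.norm_integral_le_integral_norm_uIoc
          (a := (0:ℝ)) (b := z) (f := deriv φ₀) (μ := volume)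
    have h2 : (∫ x in Set.uIoc (0:ℝ) z, |deriv φ₀ x|) ≤ ∫ x : ℝ, |deriv φ₀ x| :=
      setIntegral_le_integral hφ'int.abs (ae_of_all _ fun x => abs_nonneg _)
    calc |φ₀ z| ≤ |φ₀ z - φ₀ 0| + |φ₀ 0| := by
          simpa using abs_add_le (φ₀ z - φ₀ 0) (φ₀ 0)
      _ ≤ (∫ x : ℝ, |deriv φ₀ x|) + |φ₀ 0| := by linarith [h1.trans h2]
      _ = M := by rw [hMdef]; ring
  -- bound for W'' along φ₀
  obtain ⟨K, hK⟩ := isCompact_Icc.exists_bound_of_continuousOn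
    (s := Icc (-M) M) (hW2.continuous.continuousOn (f := deriv (deriv W)))
  have hφmem : ∀ z, φ₀ z ∈ Icc (-M) M := fun z => by
    have := abs_le.mp (hM z); exact ⟨this.1, this.2⟩
  have hgK : ∀ z, |deriv (deriv W) (φ₀ z)| ≤ K := fun z => by
    simpa [Real.norm_eq_abs] using hK _ (hφmem z)
  have hK0 : 0 ≤ K := (abs_nonneg _).trans (hgK 0)
  -- pointwise bound on Φ
  set D : ℝ := (K + 2) * C ^ 2 with hDdef
  have hΦbound : ∀ z, |Φ z| ≤ D * ((|z| + 1) * Real.exp (-(2*ν) * |z|)) := by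
    intro z
    set a := |deriv φ₀ z| with hadef
    set b := |deriv (deriv φ₀) z| with hbdef
    set E := C * Real.exp (-ν * |z|) with hEdef
    have ha : a ≤ E := (hd z).1
    have hb : b ≤ E := (hd z).2
    have ha0 : 0 ≤ a := abs_nonneg _
    have hb0 : 0 ≤ b := abs_nonneg _
    have hE0 : 0 ≤ E := ha0.trans ha
    have hz0 : 0 ≤ |z| := abs_nonneg _
    have tri : |Φ z| ≤ |z * (deriv φ₀ z) ^ 2 * deriv (deriv W) (φ₀ z)|
        + |deriv φ₀ z * deriv (deriv φ₀) z| + |z * (deriv (deriv φ₀) z) ^ 2| := by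
      rw [hΦdef]
      exact (abs_sub _ _).trans (add_le_add (abs_sub _ _) le_rfl)
    have q1 : |z * (deriv φ₀ z) ^ 2 * deriv (deriv W) (φ₀ z)| ≤ |z| * a ^ 2 * K := by
      rw [abs_mul, abs_mul, abs_pow]
      exact mul_le_mul_of_nonneg_left (hgK z)
        (by positivity)
    have q2 : |deriv φ₀ z * deriv (deriv φ₀) z| = a * b := abs_mul _ _
    have q3 : |z * (deriv (deriv φ₀) z) ^ 2| = |z| * b ^ 2 := by
      rw [abs_mul, abs_pow]
    have hA2 : a ^ 2 ≤ E ^ 2 := pow_le_pow_left₀ ha0 ha 2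
    have hB2 : b ^ 2 ≤ E ^ 2 := pow_le_pow_left₀ hb0 hb 2
    have hab : a * b ≤ E ^ 2 := by
      calc a * b ≤ E * E := mul_le_mul ha hb hb0 hE0
        _ = E ^ 2 := (sq E).symm
    have hEsq : E ^ 2 = C ^ 2 * Real.exp (-(2*ν) * |z|) := by
      rw [hEdef, show -(2*ν)*|z| = (-ν*|z|) + (-ν*|z|) by ring, Real.exp_add]
      ring
    have hRHS : D * ((|z| + 1) * Real.exp (-(2*ν) * |z|)) = (K + 2) * ((|z| + 1) * E ^ 2) := by
      rw [hEsq, hDdef]; ring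
    rw [hRHS]
    have t1 : |z| * a ^ 2 * K ≤ |z| * E ^ 2 * K :=
      mul_le_mul_of_nonneg_right (mul_le_mul_of_nonneg_left hA2 hz0) hK0
    have t3 : |z| * b ^ 2 ≤ |z| * E ^ 2 := mul_le_mul_of_nonneg_left hB2 hz0
    have hE2 : 0 ≤ E ^ 2 := sq_nonneg E
    nlinarith [tri, q1, q2, q3, t1, t3, hab, mul_nonneg hK0 hE2,
      mul_nonneg hz0 hE2, mul_nonneg (mul_nonneg hz0 hK0) hE2]
  -- limits of the bound
  have hgtop : Tendsto (fun z : ℝ => D * ((z + 1) * Real.exp (-(2*ν) * z)))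
      atTop (𝓝 0) := by
    have A := Real.tendsto_pow_mul_exp_neg_atTop_nhds_zero 1
    have B := Real.tendsto_exp_neg_atTop_nhds_zero
    have h2ν : Tendsto (fun z : ℝ => 2 * ν * z) atTop atTop :=
      Tendsto.const_mul_atTop (by linarith) tendsto_id
    have A' := (A.comp h2ν).const_mul (D / (2*ν))
    have B' := (B.comp h2ν).const_mul D
    have := A'.add B'
    rw [mul_zero, mul_zero, add_zero] at this
    refine this.congr fun z => ?_
    simp only [Function.comp_apply, pow_one]
    have h2ν0 : (2 : ℝ) * ν ≠ 0 := by positivity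
    field_simp
  have hΦtop : Tendsto Φ atTop (𝓝 0) := by
    apply squeeze_zero_norm' (a := fun z : ℝ => D * ((z + 1) * Real.exp (-(2*ν) * z))) _ hgtop
    filter_upwards [eventually_ge_atTop (0:ℝ)] with z hz
    have := hΦbound z
    rwa [abs_of_nonneg hz] at this
  have hΦbot : Tendsto Φ atBot (𝓝 0) := by
    apply squeeze_zero_norm'
      (a := fun z : ℝ => D * ((-z + 1) * Real.exp (-(2*ν) * (-z)))) _
      (hgtop.comp tendsto_neg_atBot_atTop)
    filter_upwards [eventually_le_atBot (0:ℝ)] with z hz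
    have := hΦbound z
    rwa [abs_of_nonpos hz] at this
  -- FTC on the real line
  have hint2' : Integrable (fun z : ℝ => 2 * (deriv (deriv φ₀) z) ^ 2) := hint2.const_mul 2
  have hint' : Integrable (fun z : ℝ =>
      deriv (deriv (deriv W)) (φ₀ z) * z * (deriv φ₀ z) ^ 3
        - 2 * (deriv (deriv φ₀) z) ^ 2) := hint1.sub hint2'
  have hzero := integral_of_hasDerivAt_of_tendsto hΦ hint' hΦbot hΦtop
  rw [sub_zero] at hzero
  rw [integral_sub hint1 hint2', integral_const_mul] at hzero
  linarith
end

section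
/- Let f : ℝ → ℝ be continuous and suppose f(z) → f⁺ and f(z) → f⁻ exponentially fast as z → ±∞. If the equation -w'' + W''(φ₀) w = f has a bounded solution w on ℝ with w' decaying at infinity, then ∫_ℝ f(z) φ₀'(z) dz = 0. -/
open MeasureTheory Filter

lemma deriv_limit_zero_atTop (g g' : ℝ → ℝ) (hg : ∀ z, HasDerivAt g (g' z) z)
    (hc : Continuous g') (h0 : Tendsto g atTop (nhds 0)) {L : ℝ}
    (hL : Tendsto g' atTop (nhds L)) : L = 0 := by
  have h1 : Tendsto (fun t => g (t + 1) - g t) atTop (nhds (0 - 0)) :=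
    (h0.comp (tendsto_atTop_add_const_right atTop 1 tendsto_id)).sub h0
  have h2 : Tendsto (fun t => g (t + 1) - g t) atTop (nhds L) := by
    rw [Metric.tendsto_nhds]
    intro ε hε
    have hh := Metric.tendsto_nhds.mp hL (ε / 2) (by positivity)
    obtain ⟨N, hN⟩ := eventually_atTop.mp hh
    filter_upwards [eventually_ge_atTop N] with t ht
    have hint : g (t + 1) - g t = ∫ z in t..(t + 1), g' z :=
      (intervalIntegral.integral_eq_sub_of_hasDerivAt (fun z _ => hg z)
        (hc.intervalIntegrable _ _)).symm
    rw [Real.dist_eq, hint]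
    have hsub : (∫ z in t..(t + 1), g' z) - L = ∫ z in t..(t + 1), (g' z - L) := by
      rw [intervalIntegral.integral_sub (hc.intervalIntegrable _ _)
        (intervalIntegrable_const)]
      simp
    rw [hsub]
    have hbd : |∫ z in t..(t + 1), (g' z - L)| ≤ (ε / 2) * |(t + 1) - t| := by
      rw [← Real.norm_eq_abs]
      apply intervalIntegral.norm_integral_le_of_norm_le_const
      intro x hx
      rw [Set.uIoc_of_le (by linarith)] at hx
      have hNx : N ≤ x := le_trans ht (le_of_lt hx.1)
      have hd := hN x hNx
      rw [Real.dist_eq] at hd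
      rw [Real.norm_eq_abs]
      exact le_of_lt hd
    have : |(t + 1) - t| = 1 := by norm_num
    rw [this] at hbd
    linarith
  have := tendsto_nhds_unique h2 (by simpa using h1)
  exact this

lemma deriv_limit_zero_atBot (g g' : ℝ → ℝ) (hg : ∀ z, HasDerivAt g (g' z) z)
    (hc : Continuous g') (h0 : Tendsto g atBot (nhds 0)) {L : ℝ}
    (hL : Tendsto g' atBot (nhds L)) : L = 0 := by
  have key : (-L) = 0 := by
    apply deriv_limit_zero_atTop (fun x => g (-x)) (fun x => -(g' (-x)))
    · intro z
      have := (hg (-z)).comp z (hasDerivAt_neg z)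
      simp [mul_comm] at this; exact this
    · exact (hc.comp continuous_neg).neg
    · exact h0.comp tendsto_neg_atTop_atBot
    · exact (hL.comp tendsto_neg_atTop_atBot).neg
  linarith


/-- Necessity direction of the Fredholm alternative for `L₀ w = f`: a bounded solution with
decaying derivative forces the compatibility condition `∫ f φ₀' = 0`. -/
theorem fredholm_necessity
    (W φ₀ : ℝ → ℝ)
    (hW : ContDiff ℝ (⊤ : ℕ∞) W)
    (hW''1 : 0 < deriv (deriv W) 1) (hW''m1 : 0 < deriv (deriv W) (-1))
    (hφ : ContDiff ℝ (⊤ : ℕ∞) φ₀)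
    (hode : ∀ z : ℝ, deriv (deriv φ₀) z = deriv W (φ₀ z))
    (hlim_top : Tendsto φ₀ atTop (nhds 1))
    (hlim_bot : Tendsto φ₀ atBot (nhds (-1)))
    (hφ'pos : ∀ z : ℝ, 0 < deriv φ₀ z)
    (hφ'decay : ∃ C > 0, ∃ ν > 0, ∀ z : ℝ, |deriv φ₀ z| ≤ C * Real.exp (-ν * |z|))
    (f : ℝ → ℝ) (hf : Continuous f)
    (fplus fminus : ℝ)
    (hfdecay : ∃ C > 0, ∃ ν > 0, ∀ z : ℝ,
      (0 ≤ z → |f z - fplus| ≤ C * Real.exp (-ν * z)) ∧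
      (z ≤ 0 → |f z - fminus| ≤ C * Real.exp (ν * z)))
    (w : ℝ → ℝ) (hw : ContDiff ℝ 2 w)
    (hwsol : ∀ z : ℝ, -(deriv (deriv w) z) + deriv (deriv W) (φ₀ z) * w z = f z)
    (hwbdd : ∃ M : ℝ, ∀ z : ℝ, |w z| ≤ M)
    (hw'top : Tendsto (deriv w) atTop (nhds 0))
    (hw'bot : Tendsto (deriv w) atBot (nhds 0))
    (hint : Integrable (fun z : ℝ => f z * deriv φ₀ z)) :
    ∫ z : ℝ, f z * deriv φ₀ z = 0 := by
  -- basic differentiability facts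
  have hone : (1 : WithTop ℕ∞) ≤ ((⊤ : ℕ∞) : WithTop ℕ∞) := by
    exact_mod_cast le_top
  have hphiI : ContDiff ℝ (((⊤ : ℕ∞) : WithTop ℕ∞)) φ₀ := hφ.of_le (by simp)
  have hWI : ContDiff ℝ (((⊤ : ℕ∞) : WithTop ℕ∞)) W := hW.of_le (by simp)
  have hφd : ∀ z, HasDerivAt φ₀ (deriv φ₀ z) z := fun z =>
    ((hphiI.differentiable (ne_of_gt (lt_of_lt_of_le zero_lt_one hone))) z).hasDerivAt
  have hφcd : ContDiff ℝ (((⊤ : ℕ∞) : WithTop ℕ∞)) (deriv φ₀) :=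
    (contDiff_infty_iff_deriv.mp hphiI).2
  have hφ'd : ∀ z, HasDerivAt (deriv φ₀) (deriv (deriv φ₀) z) z := fun z =>
    ((hφcd.differentiable (ne_of_gt (lt_of_lt_of_le zero_lt_one hone))) z).hasDerivAt
  have hW'cd : ContDiff ℝ (((⊤ : ℕ∞) : WithTop ℕ∞)) (deriv W) :=
    (contDiff_infty_iff_deriv.mp hWI).2
  have hφ''eq : deriv (deriv φ₀) = fun z => deriv W (φ₀ z) := funext hode
  have hφ''d : ∀ z, HasDerivAt (deriv (deriv φ₀))
      (deriv (deriv W) (φ₀ z) * deriv φ₀ z) z := by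
    intro z
    rw [hφ''eq]
    exact HasDerivAt.comp z ((hW'cd.differentiable (ne_of_gt (lt_of_lt_of_le zero_lt_one hone))) (φ₀ z)).hasDerivAt (hφd z)
  have hw2 : ContDiff ℝ ((1 : WithTop ℕ∞) + 1) w := by
    have : ((2 : WithTop ℕ∞)) = 1 + 1 := by norm_num
    rwa [this] at hw
  have hwd : ∀ z, HasDerivAt w (deriv w z) z := fun z =>
    ((hw.differentiable two_ne_zero) z).hasDerivAt
  have hw1 : ContDiff ℝ 1 (deriv w) := (contDiff_succ_iff_deriv.mp hw2).2.2
  have hw'd : ∀ z, HasDerivAt (deriv w) (deriv (deriv w) z) z := fun z =>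
    ((hw1.differentiable one_ne_zero) z).hasDerivAt
  -- the antiderivative
  set F : ℝ → ℝ := fun z => -(deriv w z * deriv φ₀ z) + w z * deriv (deriv φ₀) z with hFdef
  have hF : ∀ z, HasDerivAt F (f z * deriv φ₀ z) z := by
    intro z
    have h1 := ((hw'd z).mul (hφ'd z)).neg
    have h2 := (hwd z).mul (hφ''d z)
    have h3 := h1.add h2
    refine h3.congr_deriv ?_
    rw [← hwsol z]
    ring
  -- decay of φ₀'
  obtain ⟨C, hC, ν, hν, hdec⟩ := hφ'decay
  have hexp_top : Tendsto (fun z : ℝ => C * Real.exp (-ν * z)) atTop (nhds 0) := by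
    have : Tendsto (fun z : ℝ => Real.exp (-ν * z)) atTop (nhds 0) :=
      Real.tendsto_exp_atBot.comp (tendsto_id.const_mul_atTop_of_neg (by linarith))
    simpa using this.const_mul C
  have hφ'0top : Tendsto (deriv φ₀) atTop (nhds 0) := by
    apply squeeze_zero_norm' _ hexp_top
    filter_upwards [eventually_ge_atTop (0 : ℝ)] with z hz
    have := hdec z
    rwa [abs_of_nonneg hz] at this
  have hφ'0bot : Tendsto (deriv φ₀) atBot (nhds 0) := by
    have hexp_bot : Tendsto (fun z : ℝ => C * Real.exp (ν * z)) atBot (nhds 0) := by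
      have : Tendsto (fun z : ℝ => Real.exp (ν * z)) atBot (nhds 0) :=
        Real.tendsto_exp_atBot.comp (Tendsto.const_mul_atBot hν tendsto_id)
      simpa using this.const_mul C
    apply squeeze_zero_norm' _ hexp_bot
    filter_upwards [eventually_le_atBot (0 : ℝ)] with z hz
    have h1 := hdec z
    have h2 : -ν * |z| = ν * z := by rw [abs_of_nonpos hz]; ring
    rw [h2] at h1
    exact h1
  -- continuity of φ₀''
  have hφ''cont : Continuous (deriv (deriv φ₀)) := by
    rw [hφ''eq]; exact hW'cd.continuous.comp hφ.continuous
  -- W'(±1) = 0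
  have hφ''top : Tendsto (deriv (deriv φ₀)) atTop (nhds (deriv W 1)) := by
    rw [hφ''eq]
    exact (hW'cd.continuous.tendsto 1).comp hlim_top
  have hφ''bot : Tendsto (deriv (deriv φ₀)) atBot (nhds (deriv W (-1))) := by
    rw [hφ''eq]
    exact (hW'cd.continuous.tendsto (-1)).comp hlim_bot
  have hW'1 : deriv W 1 = 0 :=
    deriv_limit_zero_atTop (deriv φ₀) (deriv (deriv φ₀)) hφ'd hφ''cont hφ'0top hφ''top
  have hW'm1 : deriv W (-1) = 0 :=
    deriv_limit_zero_atBot (deriv φ₀) (deriv (deriv φ₀)) hφ'd hφ''cont hφ'0bot hφ''bot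
  have hφ''0top : Tendsto (deriv (deriv φ₀)) atTop (nhds 0) := by rwa [hW'1] at hφ''top
  have hφ''0bot : Tendsto (deriv (deriv φ₀)) atBot (nhds 0) := by rwa [hW'm1] at hφ''bot
  -- w bounded times φ₀'' → 0
  obtain ⟨M, hM⟩ := hwbdd
  have hwφ''top : Tendsto (fun z => w z * deriv (deriv φ₀) z) atTop (nhds 0) := by
    apply squeeze_zero_norm (fun z => ?_) (by simpa using (hφ''0top.abs.const_mul M))
    calc ‖w z * deriv (deriv φ₀) z‖ = |w z| * |deriv (deriv φ₀) z| := abs_mul _ _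
      _ ≤ M * |deriv (deriv φ₀) z| :=
        mul_le_mul_of_nonneg_right (hM z) (abs_nonneg _)
  have hwφ''bot : Tendsto (fun z => w z * deriv (deriv φ₀) z) atBot (nhds 0) := by
    apply squeeze_zero_norm (fun z => ?_) (by simpa using (hφ''0bot.abs.const_mul M))
    calc ‖w z * deriv (deriv φ₀) z‖ = |w z| * |deriv (deriv φ₀) z| := abs_mul _ _
      _ ≤ M * |deriv (deriv φ₀) z| :=
        mul_le_mul_of_nonneg_right (hM z) (abs_nonneg _)
  -- F → 0 at ±∞
  have hFtop : Tendsto F atTop (nhds 0) := by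
    have := ((hw'top.mul hφ'0top).neg).add hwφ''top
    simpa using this
  have hFbot : Tendsto F atBot (nhds 0) := by
    have := ((hw'bot.mul hφ'0bot).neg).add hwφ''bot
    simpa using this
  -- interval integrals
  have hcont : Continuous (fun z => f z * deriv φ₀ z) := hf.mul hφcd.continuous
  have hIeq : ∀ R : ℝ, (∫ z in (-R)..R, f z * deriv φ₀ z) = F R - F (-R) := fun R =>
    intervalIntegral.integral_eq_sub_of_hasDerivAt (fun z _ => hF z)
      (hcont.intervalIntegrable _ _)
  have hI1 : Tendsto (fun R : ℝ => ∫ z in (-R)..R, f z * deriv φ₀ z) atTop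
      (nhds (∫ z : ℝ, f z * deriv φ₀ z)) :=
    intervalIntegral_tendsto_integral hint tendsto_neg_atTop_atBot tendsto_id
  have hI2 : Tendsto (fun R : ℝ => ∫ z in (-R)..R, f z * deriv φ₀ z) atTop (nhds 0) := by
    simp only [hIeq]
    have := hFtop.sub (hFbot.comp tendsto_neg_atTop_atBot)
    simpa using this
  exact tendsto_nhds_unique hI1 hI2
end
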